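/- Let n and ℓ be positive integers with n ≤ 2ℓ−2 if n is even and n ≤ 2ℓ−1 if n is odd. Then the antisymmetric integer matrix A_{n,ℓ} is equivalent to the block-diagonal matrix D_{2ℓ}(1, …, 1, n) consisting of ℓ−1 blocks K₁ followed by one block K_n. -/

import Mathlib

open Matrix

/-- Entry of the antisymmetric matrix `S_N` whose entries above the diagonal are all `1`
(indices are 0-based naturals). -/
def SmatE (p q : ℕ) : ℤ := if p < q then 1 else if q < p then -1 else 0

/-- The vector `v_{n,ℓ} ∈ ℤ^{2ℓ-1}` (0-based index `p`; the paper's 1-based index is `p+1`). -/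
def vvecE (n ℓ p : ℕ) : ℤ :=
  if p < n then (-1) ^ p
  else if p = 2 * ℓ - 2 ∧ Even n then 0
  else 1

/-- Entry of the 2ℓ×2ℓ block matrix `A_{n,ℓ} = [[S_{2ℓ-1}, v_{n,ℓ}], [-v_{n,ℓ}ᵀ, 0]]`
(0-based indices). -/
def AmatE (n ℓ p q : ℕ) : ℤ :=
  if p < 2 * ℓ - 1 then
    (if q < 2 * ℓ - 1 then SmatE p q else vvecE n ℓ p)
  else
    (if q < 2 * ℓ - 1 then -(vvecE n ℓ q) else 0)

/-- The antisymmetric 2ℓ×2ℓ integer matrix `A_{n,ℓ}`. -/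
def Amat (n ℓ : ℕ) : Matrix (Fin (2 * ℓ)) (Fin (2 * ℓ)) ℤ :=
  Matrix.of fun i j => AmatE n ℓ (i : ℕ) (j : ℕ)

/-- The block-diagonal antisymmetric N×N matrix `D_N(n₁, …, n_k)` whose first diagonal
2×2 blocks are `K_{n₁}, …, K_{n_k}` (with `K_s = [[0,s],[-s,0]]`) and whose remaining
entries vanish. -/
def Dmat (N : ℕ) (ns : List ℤ) : Matrix (Fin N) (Fin N) ℤ :=
  Matrix.of fun i j =>
    if (j : ℕ) = (i : ℕ) + 1 ∧ (i : ℕ) % 2 = 0 then ns.getD ((i : ℕ) / 2) 0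
    else if (i : ℕ) = (j : ℕ) + 1 ∧ (j : ℕ) % 2 = 0 then -(ns.getD ((j : ℕ) / 2) 0)
    else 0

/-- Two integer matrices are equivalent if `B = T * A * Tᵀ` for some `T ∈ GL(N, ℤ)`. -/
def MatEquiv {n : Type*} [Fintype n] [DecidableEq n] (A B : Matrix n n ℤ) : Prop :=
  ∃ T : Matrix n n ℤ, IsUnit T.det ∧ B = T * A * Tᵀ

/-!
Read `A_{n,ℓ}` as the Gram matrix of an alternating form `ω` on `ℤ^{2ℓ}` in the basis
`e_0, …, e_{2ℓ-1}`, and change basis three times by unitriangular matrices.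
Replacing `e_r` by `f_r = e_r - e_{r+1}` (`r < 2ℓ-2`) turns `S_{2ℓ-1}` into the path matrix
(`ω(f_r, f_{r+1}) = 1`, all other pairings zero) and `v` into its successive differences `d`.
Replacing `f_{2t}` by the partial sum `f_0 + f_2 + ⋯ + f_{2t}` splits the path into `ℓ-1`
hyperbolic pairs plus one vector orthogonal to them, whose pairing with `e_{2ℓ-1}` is the
alternating sum `∑ (-1)^p v_p = n`; this change is checked through its inverse, which is sparse.
Finally, adding to `e_{2ℓ-1}` a combination of the hyperbolic pairs kills all its other pairings.
-/

open Finset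

theorem MatEquiv.trans {ι : Type*} [Fintype ι] [DecidableEq ι] {A B C : Matrix ι ι ℤ}
    (hAB : MatEquiv A B) (hBC : MatEquiv B C) : MatEquiv A C := by
  obtain ⟨T, hT, rfl⟩ := hAB
  obtain ⟨S, hS, rfl⟩ := hBC
  refine ⟨S * T, by rw [det_mul]; exact hS.mul hT, ?_⟩
  simp only [transpose_mul, Matrix.mul_assoc]

theorem MatEquiv.symm {ι : Type*} [Fintype ι] [DecidableEq ι] {A B : Matrix ι ι ℤ}
    (h : MatEquiv A B) : MatEquiv B A := by
  obtain ⟨T, hT, rfl⟩ := h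
  refine ⟨T⁻¹, by rwa [det_nonsing_inv, isUnit_ringInverse], ?_⟩
  rw [transpose_nonsing_inv]
  simp only [← Matrix.mul_assoc, nonsing_inv_mul T hT, Matrix.one_mul]
  rw [Matrix.mul_assoc, mul_nonsing_inv _ (by rwa [det_transpose]), Matrix.mul_one]

-- Entries are functions `ℕ → ℕ → ℤ` read off on `Fin N`, so that index shifts such as `i + 1`
-- never wrap around.
def natMat (N : ℕ) (f : ℕ → ℕ → ℤ) : Matrix (Fin N) (Fin N) ℤ := Matrix.of fun i j => f i j

theorem natMat_congr {N : ℕ} {f g : ℕ → ℕ → ℤ} (h : ∀ i < N, ∀ j < N, f i j = g i j) :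
    natMat N f = natMat N g := by
  ext i j
  exact h i i.isLt j j.isLt

def bilin (N : ℕ) (a : ℕ → ℕ → ℤ) (x y : ℕ → ℤ) : ℤ :=
  ∑ p ∈ range N, ∑ q ∈ range N, x p * a p q * y q

theorem natMat_mul_mul_transpose (N : ℕ) (t a : ℕ → ℕ → ℤ) :
    natMat N t * natMat N a * (natMat N t)ᵀ = natMat N fun i j => bilin N a (t i) (t j) := by
  ext i j
  simp only [natMat, bilin, mul_apply, transpose_apply, of_apply, sum_mul, Finset.sum_range]
  exact sum_comm

theorem isUnit_det_natMat_of_lower {N : ℕ} {t : ℕ → ℕ → ℤ} (hlow : ∀ i j, i < j → t i j = 0)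
    (hdiag : ∀ i, t i i = 1) : IsUnit (natMat N t).det := by
  rw [det_of_isLowerTriangular (natMat N t) fun i j hij => hlow i j hij]
  simp [natMat, hdiag]

theorem isUnit_det_natMat_of_upper {N : ℕ} {t : ℕ → ℕ → ℤ} (hup : ∀ i j, j < i → t i j = 0)
    (hdiag : ∀ i, t i i = 1) : IsUnit (natMat N t).det := by
  rw [det_of_isUpperTriangular (M := natMat N t) fun i j hij => hup i j hij]
  simp [natMat, hdiag]

theorem matEquiv_natMat_bilin {N : ℕ} {t : ℕ → ℕ → ℤ} (ht : IsUnit (natMat N t).det)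
    (a b : ℕ → ℕ → ℤ) (hb : ∀ i < N, ∀ j < N, bilin N a (t i) (t j) = b i j) :
    MatEquiv (natMat N a) (natMat N b) :=
  ⟨natMat N t, ht, by rw [natMat_mul_mul_transpose, natMat_congr hb]⟩

section Bilin

variable {N : ℕ} {a : ℕ → ℕ → ℤ}

theorem bilin_sub_left (x x' y : ℕ → ℤ) :
    bilin N a (x - x') y = bilin N a x y - bilin N a x' y := by
  simp only [bilin, Pi.sub_apply, sub_mul, sum_sub_distrib]

theorem bilin_add_right (x y y' : ℕ → ℤ) :
    bilin N a x (y + y') = bilin N a x y + bilin N a x y' := by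
  simp only [bilin, Pi.add_apply, mul_add, sum_add_distrib]

theorem bilin_sub_right (x y y' : ℕ → ℤ) :
    bilin N a x (y - y') = bilin N a x y - bilin N a x y' := by
  simp only [bilin, Pi.sub_apply, mul_sub, sum_sub_distrib]

theorem bilin_single_single (i j : ℕ) (c d : ℤ) :
    bilin N a (Pi.single i c) (Pi.single j d) = if i < N ∧ j < N then c * a i j * d else 0 := by
  simp only [bilin, Pi.single_apply, mul_ite, ite_mul, mul_zero, zero_mul, sum_ite_eq', mem_range]
  split_ifs <;> simp_all

theorem bilin_single_left (i : ℕ) (y : ℕ → ℤ) :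
    bilin N a (Pi.single i 1) y = if i < N then ∑ q ∈ range N, a i q * y q else 0 := by
  simp [bilin, Pi.single_apply, ite_mul, sum_ite_eq']

theorem bilin_single_right (x : ℕ → ℤ) (j : ℕ) :
    bilin N a x (Pi.single j 1) = if j < N then ∑ p ∈ range N, x p * a p j else 0 := by
  simp only [bilin, Pi.single_apply, mul_ite, mul_zero, sum_ite_eq', mem_range]
  split_ifs <;> simp

theorem bilin_swap (ha : ∀ p q, a q p = -a p q) (x y : ℕ → ℤ) :
    bilin N a y x = -bilin N a x y := by
  rw [bilin, sum_comm, bilin, ← sum_neg_distrib]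
  refine sum_congr rfl fun p _ => ?_
  rw [← sum_neg_distrib]
  refine sum_congr rfl fun q _ => ?_
  rw [ha]
  ring

theorem bilin_self (ha : ∀ p q, a q p = -a p q) (x : ℕ → ℤ) : bilin N a x x = 0 := by
  have := bilin_swap (N := N) ha x x
  omega

end Bilin

def border (m : ℕ) (s : ℕ → ℕ → ℤ) (w : ℕ → ℤ) (p q : ℕ) : ℤ :=
  if p < m then (if q < m then s p q else w p) else if q < m then -w q else 0

theorem border_congr {m : ℕ} {s : ℕ → ℕ → ℤ} {w w' : ℕ → ℤ} (h : ∀ p < m, w p = w' p) :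
    border m s w = border m s w' := by
  ext p q
  unfold border
  split_ifs with hp hq hq
  · rfl
  · rw [h p hp]
  · rw [h q hq]
  · rfl

theorem border_antisymm {m : ℕ} {s : ℕ → ℕ → ℤ} (w : ℕ → ℤ) (hs : ∀ p q, s q p = -s p q)
    (p q : ℕ) : border m s w q p = -border m s w p q := by
  unfold border
  split_ifs <;> first | exact hs p q | omega

section Border

variable {m : ℕ} {s : ℕ → ℕ → ℤ} {w : ℕ → ℤ} {x y : ℕ → ℤ}

theorem bilin_border (hx : ∀ p, m ≤ p → x p = 0) (hy : ∀ q, m ≤ q → y q = 0) :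
    bilin (m + 1) (border m s w) x y = bilin m s x y := by
  have hxm : x m = 0 := hx m le_rfl
  have hym : y m = 0 := hy m le_rfl
  simp only [bilin, sum_range_succ, hxm, hym, mul_zero, zero_mul, sum_const_zero, add_zero]
  refine sum_congr rfl fun p hp => sum_congr rfl fun q hq => ?_
  rw [border, if_pos (mem_range.1 hp), if_pos (mem_range.1 hq)]

theorem bilin_border_single_right (hx : ∀ p, m ≤ p → x p = 0) :
    bilin (m + 1) (border m s w) x (Pi.single m 1) = ∑ p ∈ range m, x p * w p := by
  rw [bilin_single_right, if_pos m.lt_succ_self, sum_range_succ, hx m le_rfl, zero_mul, add_zero]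
  refine sum_congr rfl fun p hp => ?_
  rw [border, if_pos (mem_range.1 hp), if_neg (lt_irrefl m)]

theorem bilin_border_single_left (hy : ∀ q, m ≤ q → y q = 0) :
    bilin (m + 1) (border m s w) (Pi.single m 1) y = -∑ q ∈ range m, w q * y q := by
  rw [bilin_single_left, if_pos m.lt_succ_self, sum_range_succ, hy m le_rfl, mul_zero, add_zero,
    ← sum_neg_distrib]
  refine sum_congr rfl fun q hq => ?_
  rw [border, if_neg (lt_irrefl m), if_pos (mem_range.1 hq), neg_mul]

end Border

theorem matEquiv_border {m : ℕ} {s s' : ℕ → ℕ → ℤ} {w w' : ℕ → ℤ} (t : ℕ → ℕ → ℤ)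
    (ht : IsUnit (natMat (m + 1) t).det) (hsupp : ∀ i < m, ∀ p, m ≤ p → t i p = 0)
    (hlast : t m = Pi.single m 1) (hs : ∀ i < m, ∀ j < m, bilin m s (t i) (t j) = s' i j)
    (hw : ∀ i < m, ∑ p ∈ range m, t i p * w p = w' i) :
    MatEquiv (natMat (m + 1) (border m s w)) (natMat (m + 1) (border m s' w')) := by
  refine matEquiv_natMat_bilin ht _ _ fun i hi j hj => ?_
  rcases (Nat.lt_succ_iff_lt_or_eq.1 hi) with hi | rfl <;>
    rcases (Nat.lt_succ_iff_lt_or_eq.1 hj) with hj | rfl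
  · rw [bilin_border (hsupp i hi) (hsupp j hj), hs i hi j hj, border, if_pos hi, if_pos hj]
  · rw [hlast, bilin_border_single_right (hsupp i hi), hw i hi, border, if_pos hi,
      if_neg (lt_irrefl _)]
  · rw [hlast, bilin_border_single_left (hsupp j hj), border, if_neg (lt_irrefl _), if_pos hj]
    simp only [mul_comm (w _), hw j hj]
  · simp [hlast, bilin_single_single, border]

theorem sum_range_single_mul (m i : ℕ) (c : ℤ) (f : ℕ → ℤ) :
    ∑ p ∈ range m, (Pi.single i c : ℕ → ℤ) p * f p = if i < m then c * f i else 0 := by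
  simp [Pi.single_apply, ite_mul, sum_ite_eq']

def pathMat (p q : ℕ) : ℤ := if q = p + 1 then 1 else if p = q + 1 then -1 else 0

def blockMat (p q : ℕ) : ℤ :=
  if q = p + 1 ∧ p % 2 = 0 then 1 else if p = q + 1 ∧ q % 2 = 0 then -1 else 0

theorem blockMat_antisymm (p q : ℕ) : blockMat q p = -blockMat p q := by
  unfold blockMat
  split_ifs <;> omega

theorem sum_blockMat_mul {n i : ℕ} (hi : i + 1 < n) (f : ℕ → ℤ) :
    ∑ q ∈ range n, blockMat i q * f q = if i % 2 = 0 then f (i + 1) else -f (i - 1) := by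
  split_ifs with h
  · rw [sum_eq_single_of_mem (i + 1) (mem_range.2 hi) fun q _ hq => ?_]
    · simp [blockMat, h]
    · simp only [blockMat]; split_ifs <;> omega
  · rw [sum_eq_single_of_mem (i - 1) (mem_range.2 (by omega)) fun q _ hq => ?_]
    · simp only [blockMat]; split_ifs <;> omega
    · simp only [blockMat]; split_ifs <;> omega

theorem border_smat_matEquiv_border_path (m : ℕ) (v : ℕ → ℤ) :
    MatEquiv (natMat (m + 1) (border m SmatE v))
      (natMat (m + 1) (border m pathMat fun p => v p - if p + 1 < m then v (p + 1) else 0)) := by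
  refine matEquiv_border (fun i => Pi.single i 1 - Pi.single (i + 1) (if i + 1 < m then 1 else 0))
    (isUnit_det_natMat_of_upper (fun i j hji => ?_) fun i => ?_) (fun i hi p hp => ?_) ?_
    (fun i hi j hj => ?_) fun i hi => ?_
  · simp only [Pi.sub_apply, Pi.single_apply]; split_ifs <;> omega
  · simp
  · simp only [Pi.sub_apply, Pi.single_apply]; split_ifs <;> omega
  · simp
  · by_cases hi' : i + 1 < m <;> by_cases hj' : j + 1 < m <;>
      simp only [hi, hj, hi', hj', ↓reduceIte, and_self, Pi.single_zero, sub_zero, bilin_sub_left,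
        bilin_sub_right, bilin_single_single, one_mul, mul_one] <;>
      simp (disch := omega) only [SmatE, pathMat, if_pos, if_neg] <;>
      (try split_ifs) <;> omega
  · simp only [Pi.sub_apply, sub_mul, sum_sub_distrib, sum_range_single_mul]
    split_ifs <;> omega

theorem border_block_matEquiv_border_path (k : ℕ) (W : ℕ → ℤ) :
    MatEquiv (natMat (2 * k + 2) (border (2 * k + 1) blockMat W))
      (natMat (2 * k + 2) (border (2 * k + 1) pathMat fun p =>
        W p - if p % 2 = 0 ∧ 2 ≤ p then W (p - 2) else 0)) := by
  refine matEquiv_border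
    (fun i => Pi.single i 1 - Pi.single (i - 2) (if i % 2 = 0 ∧ 2 ≤ i then 1 else 0))
    (isUnit_det_natMat_of_lower (fun i j hij => ?_) fun i => ?_) (fun i hi p hp => ?_) ?_
    (fun i hi j hj => ?_) fun i hi => ?_
  · simp only [Pi.sub_apply, Pi.single_apply]; split_ifs <;> omega
  · simp only [Pi.sub_apply, Pi.single_apply]; split_ifs <;> omega
  · simp only [Pi.sub_apply, Pi.single_apply]; split_ifs <;> omega
  · ext p; simp only [Pi.sub_apply, Pi.single_apply]; split_ifs <;> omega
  · by_cases hi' : i % 2 = 0 ∧ 2 ≤ i <;> by_cases hj' : j % 2 = 0 ∧ 2 ≤ j <;>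
      simp only [hi', hj', ↓reduceIte, Pi.single_zero, sub_zero, bilin_sub_left, bilin_sub_right,
        bilin_single_single] <;>
      simp (disch := omega) only [blockMat, pathMat, if_pos, if_neg, and_self, ↓reduceIte, one_mul,
        mul_one] <;>
      (try split_ifs) <;> omega
  · simp only [Pi.sub_apply, sub_mul, sum_sub_distrib, sum_range_single_mul]
    split_ifs <;> omega

def evenPrefixSum (d : ℕ → ℤ) (p : ℕ) : ℤ :=
  if p % 2 = 0 then ∑ u ∈ range (p / 2 + 1), d (2 * u) else d p

theorem evenPrefixSum_sub (d : ℕ → ℤ) (p : ℕ) :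
    evenPrefixSum d p - (if p % 2 = 0 ∧ 2 ≤ p then evenPrefixSum d (p - 2) else 0) = d p := by
  unfold evenPrefixSum
  by_cases hp : p % 2 = 0 ∧ 2 ≤ p
  · obtain ⟨q, rfl⟩ : ∃ q, p = q + 2 := ⟨p - 2, by omega⟩
    have hq : (q + 2) / 2 = q / 2 + 1 := by omega
    rw [if_pos hp, if_pos hp.1, Nat.add_sub_cancel, if_pos (by omega), hq, sum_range_succ,
      add_sub_cancel_left]
    congr 1
    omega
  · rw [if_neg hp, sub_zero]
    split_ifs with h
    · obtain rfl : p = 0 := by omega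
      simp
    · rfl

theorem border_path_matEquiv_border_block (k : ℕ) (d : ℕ → ℤ) :
    MatEquiv (natMat (2 * k + 2) (border (2 * k + 1) pathMat d))
      (natMat (2 * k + 2) (border (2 * k + 1) blockMat (evenPrefixSum d))) := by
  have h := (border_block_matEquiv_border_path k (evenPrefixSum d)).symm
  rwa [border_congr fun p _ => evenPrefixSum_sub d p] at h

-- Under `border (2k+1) blockMat w`, the vector `e_{2k+1} + clearingRow k w` pairs to zero with
-- `e_0, …, e_{2k-1}`.
def clearingRow (k : ℕ) (w : ℕ → ℤ) (p : ℕ) : ℤ :=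
  if p < 2 * k then (if p % 2 = 0 then w (p + 1) else -w (p - 1)) else 0

theorem border_block_matEquiv_border_block_single (k : ℕ) (w : ℕ → ℤ) :
    MatEquiv (natMat (2 * k + 2) (border (2 * k + 1) blockMat w))
      (natMat (2 * k + 2) (border (2 * k + 1) blockMat (Pi.single (2 * k) (w (2 * k))))) := by
  set t : ℕ → ℕ → ℤ := fun i p =>
    (Pi.single i 1 : ℕ → ℤ) p + if i = 2 * k + 1 then clearingRow k w p else 0 with ht
  have ht_lt : ∀ i < 2 * k + 1, t i = Pi.single i 1 := fun i hi => by
    ext p; simp [ht, hi.ne]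
  have ht_last : t (2 * k + 1) = Pi.single (2 * k + 1) 1 + clearingRow k w := by
    ext p; simp [ht]
  have hanti := border_antisymm (m := 2 * k + 1) w blockMat_antisymm
  have hcol : ∀ i < 2 * k + 1, bilin (2 * k + 2) (border (2 * k + 1) blockMat w) (t i)
      (t (2 * k + 1)) = (Pi.single (2 * k) (w (2 * k)) : ℕ → ℤ) i := fun i hi => by
    rw [ht_lt i hi, ht_last, bilin_add_right, bilin_single_single, bilin_single_left,
      if_pos (by omega), if_pos (by omega)]
    have hsum : ∀ q ∈ range (2 * k + 2), border (2 * k + 1) blockMat w i q * clearingRow k w q =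
        blockMat i q * clearingRow k w q := fun q hq => by
      by_cases hq' : q < 2 * k + 1
      · simp [border, hi, hq']
      · simp [clearingRow, show ¬q < 2 * k by omega]
    rw [sum_congr rfl hsum, sum_blockMat_mul (by omega), border, if_pos hi, if_neg (lt_irrefl _),
      Pi.single_apply]
    rcases Nat.even_or_odd' i with ⟨a, rfl | rfl⟩
    · by_cases ha : a = k
      · simp [ha, clearingRow]
      · simp [clearingRow, ha, show 2 * a + 1 < 2 * k by omega]
    · simp [clearingRow, show 2 * a < 2 * k by omega, show 2 * a + 1 ≠ 2 * k by omega]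
  refine matEquiv_natMat_bilin (t := t) (isUnit_det_natMat_of_lower (fun i j hij => ?_) fun i => ?_)
    _ _ fun i hi j hj => ?_
  · simp only [ht, Pi.single_apply, clearingRow]; split_ifs <;> omega
  · simp only [ht, Pi.single_apply, clearingRow]; split_ifs <;> omega
  · rcases Nat.lt_succ_iff_lt_or_eq.1 hi with hi | rfl <;>
      rcases Nat.lt_succ_iff_lt_or_eq.1 hj with hj | rfl
    · rw [ht_lt i hi, ht_lt j hj, bilin_single_single, if_pos ⟨by omega, by omega⟩]
      simp [border, hi, hj]
    · rw [hcol i hi]; simp [border, hi]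
    · rw [bilin_swap hanti, hcol j hj]; simp [border, hj]
    · rw [bilin_self hanti]; simp [border]

theorem getD_replicate_append_singleton (k t : ℕ) (x : ℤ) :
    (List.replicate k (1 : ℤ) ++ [x]).getD t 0 = if t < k then 1 else if t = k then x else 0 := by
  simp only [List.getD_eq_getElem?_getD, List.getElem?_append, List.length_replicate,
    List.getElem?_replicate, List.getElem?_singleton]
  split_ifs <;> first | rfl | omega

theorem Dmat_eq_border (k : ℕ) (x : ℤ) :
    Dmat (2 * k + 2) (List.replicate k 1 ++ [x]) =
      natMat (2 * k + 2) (border (2 * k + 1) blockMat (Pi.single (2 * k) x)) := by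
  ext i j
  simp only [Dmat, natMat, of_apply, getD_replicate_append_singleton, border, blockMat,
    Pi.single_apply]
  split_ifs <;> omega

theorem evenPrefixSum_vvecE_differences (n k : ℕ) (heven : Even n → n ≤ 2 * k)
    (hodd : ¬Even n → n ≤ 2 * k + 1) :
    evenPrefixSum (fun p => vvecE n (k + 1) p - if p + 1 < 2 * k + 1 then vvecE n (k + 1) (p + 1)
      else 0) (2 * k) = n := by
  simp only [Nat.even_iff] at heven hodd
  have hpair : ∀ u < k, vvecE n (k + 1) (2 * u) - vvecE n (k + 1) (2 * u + 1) =
      if 2 * u + 1 < n then 2 else 0 := fun u hu => by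
    have h₀ : (-1 : ℤ) ^ (2 * u) = 1 := by simp [pow_mul]
    have h₁ : (-1 : ℤ) ^ (2 * u + 1) = -1 := by simp [pow_succ, h₀]
    simp only [vvecE, Nat.even_iff, h₀, h₁]
    split_ifs <;> omega
  have hlast : vvecE n (k + 1) (2 * k) = n % 2 := by
    have h₀ : (-1 : ℤ) ^ (2 * k) = 1 := by simp [pow_mul]
    simp only [vvecE, Nat.even_iff, h₀]
    split_ifs <;> omega
  have hcount : ∑ u ∈ range k, (if 2 * u + 1 < n then (2 : ℤ) else 0) = 2 * (n / 2 : ℕ) := by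
    rw [← sum_filter, show (range k).filter (fun u => 2 * u + 1 < n) = range (n / 2) by
      ext u; simp only [mem_filter, mem_range]; omega]
    simp [mul_comm]
  rw [evenPrefixSum, if_pos (by omega), show 2 * k / 2 + 1 = k + 1 by omega, sum_range_succ,
    sum_congr rfl fun u hu => by rw [if_pos (by simp at hu; omega), hpair u (by simpa using hu)],
    hcount, if_neg (by omega), sub_zero, hlast]
  omega

theorem Amat_equiv_Dmat (n ℓ : ℕ) (hℓ : 0 < ℓ)
    (heven : Even n → n + 2 ≤ 2 * ℓ) (hodd : ¬Even n → n + 1 ≤ 2 * ℓ) :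
    MatEquiv (Amat n ℓ) (Dmat (2 * ℓ) (List.replicate (ℓ - 1) (1 : ℤ) ++ [(n : ℤ)])) := by
  obtain ⟨k, rfl⟩ : ∃ k, ℓ = k + 1 := ⟨ℓ - 1, by omega⟩
  set v := vvecE n (k + 1)
  set d : ℕ → ℤ := fun p => v p - if p + 1 < 2 * k + 1 then v (p + 1) else 0
  have hn : evenPrefixSum d (2 * k) = n :=
    evenPrefixSum_vvecE_differences n k (fun h => by have := heven h; omega)
      fun h => by have := hodd h; omega
  show MatEquiv (natMat (2 * k + 2) (border (2 * k + 1) SmatE v))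
    (Dmat (2 * k + 2) (List.replicate k 1 ++ [(n : ℤ)]))
  rw [Dmat_eq_border, ← hn]
  exact ((border_smat_matEquiv_border_path (2 * k + 1) v).trans
    (border_path_matEquiv_border_block k d)).trans
    (border_block_matEquiv_border_block_single k _)
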